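/- arXiv:1304.2204 — 6 statements merged into one kernel-verified Lean document; each statement's English description precedes it below -/
import Mathlib

section
/- For any digraphs G and H, there exists a homomorphism from the arc graph δ(G) to H if and only if there exists a homomorphism from G to δ_R(H). -/
/-- A digraph: a vertex type with an arc relation. -/
structure Dgr where
  V : Type
  A : V → V → Prop

/-- Existence of a homomorphism of digraphs. -/
def DHom (G H : Dgr) : Prop :=
  ∃ f : G.V → H.V, ∀ u v, G.A u v → H.A (f u) (f v)

/-- The arc graph δ(G): vertices are arcs of G, arc (x,y)→(y,z) for consecutive arcs. -/
def arcGraph (G : Dgr) : Dgr where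
  V := {p : G.V × G.V // G.A p.1 p.2}
  A := fun p q => p.val.2 = q.val.1

/-- The right adjoint δ_R(H): vertices are pairs (R⁻,R⁺) with R⁻ ⇛ R⁺,
arc (R⁻,R⁺)→(S⁻,S⁺) iff R⁺ ∩ S⁻ ≠ ∅. -/
def arcGraphR (H : Dgr) : Dgr where
  V := {R : Set H.V × Set H.V // ∀ a ∈ R.1, ∀ b ∈ R.2, H.A a b}
  A := fun R S => (R.val.2 ∩ S.val.1).Nonempty

theorem arcGraph_adjunction (G H : Dgr) :
    DHom (arcGraph G) H ↔ DHom G (arcGraphR H) := by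
  constructor
  · rintro ⟨f, hf⟩
    refine ⟨fun v => ⟨({x | ∃ e : (arcGraph G).V, e.val.2 = v ∧ f e = x},
      {x | ∃ e : (arcGraph G).V, e.val.1 = v ∧ f e = x}), ?_⟩, ?_⟩
    · rintro a ⟨e, he, rfl⟩ b ⟨e', he', rfl⟩
      exact hf e e' (he.trans he'.symm)
    · intro u v huv
      exact ⟨f ⟨(u, v), huv⟩, ⟨⟨(u, v), huv⟩, rfl, rfl⟩, ⟨⟨(u, v), huv⟩, rfl, rfl⟩⟩
  · rintro ⟨g, hg⟩
    have key : ∀ e : (arcGraph G).V,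
        ((g e.val.1).val.2 ∩ (g e.val.2).val.1).Nonempty :=
      fun e => hg e.val.1 e.val.2 e.prop
    choose f hf using key
    refine ⟨f, ?_⟩
    intro e e' hee
    have h1 : f e ∈ (g e'.val.1).val.1 := by
      have := (hf e).2
      rwa [hee] at this
    exact (g e'.val.1).prop _ h1 _ (hf e').1
end

section
/- For any digraphs G and H, there exists a homomorphism from Γ(G) to H if and only if there exists a homomorphism from G to Ω(H), where Γ(G) has vertex set V(G) with an arc (u,v) iff there exist x,y ∈ V(G) with arcs (x,u), (x,y), (y,v) in G, and Ω(H) has vertices all pairs (a,A) with a ∈ V(H), A ⊆ V(H), with an arc from (a,A) to (b,B) iff b ∈ A and A ⇛ B. -/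
/-- Central Pultr functor for the path template Q = 0 ← 1 → 2 → 3:
vertex set V(G), arc (u,v) iff ∃ x y with arcs (x,u), (x,y), (y,v) in G. -/
def pathGamma (G : Dgr) : Dgr where
  V := G.V
  A := fun u v => ∃ x y : G.V, G.A x u ∧ G.A x y ∧ G.A y v

/-- Right adjoint for the path template: vertices (a,A), arc (a,A)→(b,B) iff b ∈ A and A ⇛ B. -/
def pathOmega (H : Dgr) : Dgr where
  V := H.V × Set H.V
  A := fun p q => q.1 ∈ p.2 ∧ ∀ x ∈ p.2, ∀ y ∈ q.2, H.A x y

theorem path_adjunction (G H : Dgr) :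
    DHom (pathGamma G) H ↔ DHom G (pathOmega H) := by
  constructor
  · rintro ⟨f, hf⟩
    refine ⟨fun u => (f u, {h | ∃ w, G.A u w ∧ h = f w}), ?_⟩
    intro u v huv
    refine ⟨⟨v, huv, rfl⟩, ?_⟩
    rintro x ⟨a, hua, rfl⟩ y ⟨b, hvb, rfl⟩
    exact hf a b ⟨u, v, hua, huv, hvb⟩
  · rintro ⟨g, hg⟩
    refine ⟨fun u => (g u).1, ?_⟩
    rintro u v ⟨x, y, hxu, hxy, hyv⟩
    exact (hg x y hxy).2 _ (hg x u hxu).1 _ (hg y v hyv).1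
end

section
/- For any digraphs G and H, there is a homomorphism Γ(G) → H if and only if there is a homomorphism G → Ω'(H), where Γ is as in the path template (Q = 0 ← 1 → 2 → 3) and the vertices of Ω'(H) are triples (a, A₁, A₂) with a ∈ V(H), A₁, A₂ ⊆ V(H), A₁ ⇛ A₂, with an arc from (a,A₁,A₂) to (b,B₁,B₂) iff b ∈ A₁ and B₁ ⊆ A₂. -/
/-- Alternative right adjoint Ω' for the path template. -/
def pathOmega' (H : Dgr) : Dgr where
  V := {t : H.V × Set H.V × Set H.V // ∀ x ∈ t.2.1, ∀ y ∈ t.2.2, H.A x y}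
  A := fun t s => s.val.1 ∈ t.val.2.1 ∧ s.val.2.1 ⊆ t.val.2.2

theorem path_adjunction' (G H : Dgr) :
    DHom (pathGamma G) H ↔ DHom G (pathOmega' H) := by
  constructor
  · rintro ⟨f, hf⟩
    refine ⟨fun v => ⟨(f v, {z | ∃ w, G.A v w ∧ z = f w},
      {z | ∃ w w', G.A v w ∧ G.A w w' ∧ z = f w'}), ?_⟩, ?_⟩
    · rintro x ⟨w, hw, rfl⟩ y ⟨w1, w2, h1, h2, rfl⟩
      exact hf w w2 ⟨v, w1, hw, h1, h2⟩
    · intro u v huv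
      refine ⟨⟨v, huv, rfl⟩, ?_⟩
      rintro z ⟨w, hw, rfl⟩
      exact ⟨v, w, huv, hw, rfl⟩
  · rintro ⟨g, hg⟩
    refine ⟨fun v => (g v).val.1, ?_⟩
    rintro u v ⟨x, y, hxu, hxy, hyv⟩
    have h1 := hg x u hxu
    have h2 := hg x y hxy
    have h3 := hg y v hyv
    exact (g x).property _ h1.1 _ (h2.2 h3.1)
end

section
/- If Γ is a digraph functor admitting a right adjoint Ω (i.e. for all G, H: Γ(G) → H iff G → Ω(H)), and Λ is a left adjoint of Γ (i.e. for all G, H: Λ(G) → H iff G → Γ(H)), and (F, H) is a homomorphism duality pair, then (Λ(F), Ω(H)) is a homomorphism duality pair. -/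
theorem duality_transport (Γ Ω Λ : Dgr → Dgr)
    (hΩ : ∀ G H, DHom (Γ G) H ↔ DHom G (Ω H))
    (hΛ : ∀ G H, DHom (Λ G) H ↔ DHom G (Γ H))
    (F H : Dgr) (hdual : ∀ G, DHom G H ↔ ¬ DHom F G) :
    ∀ G, DHom G (Ω H) ↔ ¬ DHom (Λ F) G := by
  intro G
  rw [← hΩ, hdual, hΛ]
end

section
/- Let Γ be a digraph functor with left adjoint Λ (for all G, H: Λ(G) → H iff G → Γ(H)) and right adjoint Ω (for all G, H: Γ(G) → H iff G → Ω(H)). If ℱ is a complete set of obstructions for a digraph H, then {Λ(F) : F ∈ ℱ} is a complete set of obstructions for Ω(H). -/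
theorem obstructions_transport (Γ Λ Ω : Dgr → Dgr)
    (hΛ : ∀ G H, DHom (Λ G) H ↔ DHom G (Γ H))
    (hΩ : ∀ G H, DHom (Γ G) H ↔ DHom G (Ω H))
    (ℱ : Set Dgr) (H : Dgr)
    (hobs : ∀ G, DHom G H ↔ ∀ F ∈ ℱ, ¬ DHom F G) :
    ∀ G, DHom G (Ω H) ↔ ∀ F ∈ ℱ, ¬ DHom (Λ F) G := by
  intro G
  rw [← hΩ, hobs]
  exact ⟨fun h F hF hc => h F hF ((hΛ F G).mp hc),
         fun h F hF hc => h F hF ((hΛ F G).mpr hc)⟩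
end

section
/- Let T = (P, Q, ε₁, ε₂) be a Pultr template whose central Pultr functor Γ_T admits a right adjoint Ω. Then for every digraph G, Q admits no homomorphism to G if and only if G admits a homomorphism to Ω(P₀), where P₀ is the one-vertex digraph with no arcs; that is, (Q, Ω(P₀)) is a homomorphism duality pair. -/
/-- A Pultr template: digraphs P, Q and homomorphisms ε₁, ε₂ : P → Q. -/
structure PultrTemplate where
  P : Dgr
  Q : Dgr
  e1 : P.V → Q.V
  e2 : P.V → Q.V
  he1 : ∀ u v, P.A u v → Q.A (e1 u) (e1 v)
  he2 : ∀ u v, P.A u v → Q.A (e2 u) (e2 v)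

/-- The central Pultr functor Γ_T: vertices are homomorphisms g : P → G,
with an arc (g₁,g₂) iff there is a homomorphism h : Q → G with g₁ = h ∘ ε₁, g₂ = h ∘ ε₂. -/
def GammaT (T : PultrTemplate) (G : Dgr) : Dgr where
  V := {g : T.P.V → G.V // ∀ u v, T.P.A u v → G.A (g u) (g v)}
  A := fun g₁ g₂ => ∃ h : T.Q.V → G.V,
    (∀ u v, T.Q.A u v → G.A (h u) (h v)) ∧ g₁.val = h ∘ T.e1 ∧ g₂.val = h ∘ T.e2

/-- The one-vertex digraph with no arcs. -/
def P0 : Dgr := ⟨PUnit, fun _ _ => False⟩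

theorem pultr_duality_pair (T : PultrTemplate) (Ω : Dgr → Dgr)
    (hΩ : ∀ G H, DHom (GammaT T G) H ↔ DHom G (Ω H)) :
    ∀ G : Dgr, ¬ DHom T.Q G ↔ DHom G (Ω P0) := by
  intro G
  rw [← hΩ G P0]
  constructor
  · intro hQ
    refine ⟨fun _ => PUnit.unit, ?_⟩
    rintro g₁ g₂ ⟨h, hh, _, _⟩
    exact absurd ⟨h, hh⟩ hQ
  · rintro ⟨f, hf⟩ ⟨h, hh⟩
    exact hf ⟨h ∘ T.e1, fun u v huv => hh _ _ (T.he1 u v huv)⟩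
      ⟨h ∘ T.e2, fun u v huv => hh _ _ (T.he2 u v huv)⟩
      ⟨h, hh, rfl, rfl⟩
end
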